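/- Let A be a finite-dimensional algebra over a field F with char(F) ≠ 2, and let D : A → A be a linear map satisfying xD(x)x ∈ [A,A] for every x ∈ A. Then D(M) ⊆ M for every maximal two-sided ideal M of A; in particular D(rad(A)) ⊆ rad(A). -/

import Mathlib

/-!
Polarizing `x * D x * x ∈ [A, A]` shows that for `x` in a two-sided ideal `M`, every
`y * D x * z + z * D x * y` lies in `[A, A] + M`. Taking `z = 1` and adding the commutator
`y * D x - D x * y`, halving (this is where `char F ≠ 2` enters) gives `y * D x ∈ [A, A] + M`, and
then `y * D x * z ∈ [A, A] + M` for all `y, z`. So if `M` is maximal and `D x ∉ M`, the ideal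
generated by `M` and `D x` is `A`, whence `[A, A] + M = A`: the nonzero algebra `A / M` would be
spanned by its commutators. That is impossible for a nonzero finite-dimensional algebra: after
extending scalars to an algebraic closure, a simple quotient is a full matrix algebra, on which the
trace is a nonzero functional vanishing on commutators.
-/

/-- The radical of a finite-dimensional algebra, realized as the intersection of all
maximal two-sided ideals. -/
noncomputable def ringRad (A : Type*) [Ring A] : TwoSidedIdeal A :=
  sInf {M : TwoSidedIdeal A | IsCoatom M}

open TensorProduct

section Commutators

variable (F : Type*) {A B : Type*} [CommRing F] [Ring A] [Algebra F A] [Ring B] [Algebra F B]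

variable (A) in
def commutatorSpan : Submodule F A :=
  Submodule.span F {z : A | ∃ u v : A, z = u * v - v * u}

theorem commutator_mem_commutatorSpan (u v : A) : u * v - v * u ∈ commutatorSpan F A :=
  Submodule.subset_span ⟨u, v, rfl⟩

variable {F}

theorem commutatorSpan_map_le (f : A →ₐ[F] B) :
    (commutatorSpan F A).map f.toLinearMap ≤ commutatorSpan F B := by
  rw [commutatorSpan, Submodule.map_span_le]
  rintro _ ⟨u, v, rfl⟩
  simpa using commutator_mem_commutatorSpan F (f u) (f v)

theorem commutatorSpan_eq_top_of_surjective {f : A →ₐ[F] B} (hf : Function.Surjective f)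
    (h : commutatorSpan F A = ⊤) : commutatorSpan F B = ⊤ := by
  have hrange : LinearMap.range f.toLinearMap = ⊤ := LinearMap.range_eq_top.2 hf
  rw [eq_top_iff, ← hrange, LinearMap.range_eq_map, ← h]
  exact commutatorSpan_map_le f

end Commutators

theorem Matrix.commutatorSpan_ne_top (R n : Type*) [CommRing R] [Nontrivial R] [Fintype n]
    [DecidableEq n] [Nonempty n] : commutatorSpan R (Matrix n n R) ≠ ⊤ := by
  have hle : commutatorSpan R (Matrix n n R) ≤ LinearMap.ker (Matrix.traceLinearMap n R R) := by
    rw [commutatorSpan, Submodule.span_le]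
    rintro _ ⟨u, v, rfl⟩
    simp [Matrix.trace_mul_comm u v]
  intro htop
  obtain ⟨i⟩ := ‹Nonempty n›
  have := hle (htop ▸ Submodule.mem_top : Matrix.single i i (1 : R) ∈ _)
  simp at this

namespace TwoSidedIdeal

variable {R : Type*} [Ring R]

theorem mk'_eq_zero_iff {I : TwoSidedIdeal R} {a : R} : I.ringCon.mk' a = 0 ↔ a ∈ I :=
  (RingCon.eq _).trans (mem_iff I a).symm

theorem nontrivial_quotient {I : TwoSidedIdeal R} (hI : I ≠ ⊤) :
    Nontrivial I.ringCon.Quotient :=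
  ⟨⟨1, 0, fun h => hI (I.eq_top (mk'_eq_zero_iff.1 h))⟩⟩

theorem isSimpleRing_quotient {I : TwoSidedIdeal R} (hI : IsCoatom I) :
    IsSimpleRing I.ringCon.Quotient := by
  have := nontrivial_quotient hI.1
  refine ⟨⟨fun J => ?_⟩⟩
  have hle : I ≤ comap I.ringCon.mk' J := fun a ha => by
    rw [mem_comap, mk'_eq_zero_iff.2 ha]
    exact J.zero_mem
  rcases hle.eq_or_lt with h | h
  · refine Or.inl (eq_bot_iff.2 fun q hq => ?_)
    obtain ⟨a, rfl⟩ := I.ringCon.mk'_surjective q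
    rw [mem_bot, mk'_eq_zero_iff, h, mem_comap]
    exact hq
  · refine Or.inr (J.eq_top ?_)
    have h1 : (1 : R) ∈ comap I.ringCon.mk' J := (hI.2 _ h).symm ▸ mem_top R
    rwa [mem_comap, map_one] at h1

instance (F : Type*) [Field F] [Algebra F R] [FiniteDimensional F R] (I : TwoSidedIdeal R) :
    FiniteDimensional F I.ringCon.Quotient :=
  Module.Finite.of_surjective (I.ringCon.mkₐ F).toLinearMap (I.ringCon.mkₐ_surjective (α := F))

theorem isCoatomic_of_finiteDimensional (F : Type*) [Field F] [Algebra F R]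
    [FiniteDimensional F R] : IsCoatomic (TwoSidedIdeal R) := by
  have : WellFoundedGT (TwoSidedIdeal R) :=
    StrictMono.wellFoundedGT (f := fun I : TwoSidedIdeal R => I.asIdeal.restrictScalars F)
      (Monotone.strictMono_of_injective (fun I J h x hx => asIdeal.monotone h hx)
        fun I J h => by ext x; simpa using SetLike.ext_iff.1 h x)
  infer_instance

end TwoSidedIdeal

theorem commutatorSpan_ne_top_of_isAlgClosed (K C : Type*) [Field K] [IsAlgClosed K] [Ring C]
    [Algebra K C] [FiniteDimensional K C] [Nontrivial C] : commutatorSpan K C ≠ ⊤ := by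
  have := TwoSidedIdeal.isCoatomic_of_finiteDimensional (R := C) K
  obtain ⟨M, hM, -⟩ := (eq_top_or_exists_le_coatom (⊥ : TwoSidedIdeal C)).resolve_left bot_ne_top
  have := TwoSidedIdeal.isSimpleRing_quotient hM
  obtain ⟨n, _, ⟨e⟩⟩ := IsSimpleRing.exists_algEquiv_matrix_of_isAlgClosed K M.ringCon.Quotient
  have hsurj : Function.Surjective (e.toAlgHom.comp (M.ringCon.mkₐ K)) :=
    e.surjective.comp (M.ringCon.mkₐ_surjective (α := K))
  exact fun htop =>
    Matrix.commutatorSpan_ne_top K (Fin n) (commutatorSpan_eq_top_of_surjective hsurj htop)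

theorem commutatorSpan_baseChange_le (F A K : Type*) [CommRing F] [Ring A] [Algebra F A]
    [CommRing K] [Algebra F K] :
    (commutatorSpan F A).baseChange K ≤ commutatorSpan K (K ⊗[F] A) := by
  rw [commutatorSpan, Submodule.baseChange_span, Submodule.span_le]
  rintro _ ⟨_, ⟨u, v, rfl⟩, rfl⟩
  convert commutator_mem_commutatorSpan K ((1 : K) ⊗ₜ[F] u) ((1 : K) ⊗ₜ[F] v) using 1
  simp [TensorProduct.tmul_sub]

theorem commutatorSpan_ne_top (F A : Type*) [Field F] [Ring A] [Algebra F A]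
    [FiniteDimensional F A] [Nontrivial A] : commutatorSpan F A ≠ ⊤ := by
  intro htop
  apply commutatorSpan_ne_top_of_isAlgClosed (AlgebraicClosure F) (AlgebraicClosure F ⊗[F] A)
  rw [eq_top_iff, ← Submodule.baseChange_top (AlgebraicClosure F), ← htop]
  exact commutatorSpan_baseChange_le F A _

theorem commutatorSpan_sup_ne_top (F : Type*) {A : Type*} [Field F] [Ring A] [Algebra F A]
    [FiniteDimensional F A] {I : TwoSidedIdeal A} (hI : I ≠ ⊤) :
    commutatorSpan F A ⊔ I.asIdeal.restrictScalars F ≠ ⊤ := by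
  have := TwoSidedIdeal.nontrivial_quotient hI
  let π := I.ringCon.mkₐ F
  have hπ : LinearMap.range π.toLinearMap = ⊤ :=
    LinearMap.range_eq_top.2 (I.ringCon.mkₐ_surjective (α := F))
  have hI0 : (I.asIdeal.restrictScalars F).map π.toLinearMap = ⊥ :=
    eq_bot_iff.2 <| Submodule.map_le_iff_le_comap.2 fun _ ha =>
      (Submodule.mem_bot F).2 (TwoSidedIdeal.mk'_eq_zero_iff.2 ha)
  intro htop
  apply commutatorSpan_ne_top F I.ringCon.Quotient
  rw [eq_top_iff, ← hπ, LinearMap.range_eq_map, ← htop, Submodule.map_sup, hI0, sup_bot_eq]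
  exact commutatorSpan_map_le π

namespace AddSubgroup

variable {R : Type*} [Ring R]

def idealCore (W : AddSubgroup R) : TwoSidedIdeal R :=
  TwoSidedIdeal.mk' {a | ∀ y z, y * a * z ∈ W}
    (fun y z => by simp)
    (fun ha hb y z => by simpa [mul_add, add_mul] using W.add_mem (ha y z) (hb y z))
    (fun ha y z => by simpa using W.neg_mem (ha y z))
    (fun {c _} ha y z => by simpa [mul_assoc] using ha (y * c) z)
    (fun {_ c} ha y z => by simpa [mul_assoc] using ha y (c * z))

theorem mem_idealCore {W : AddSubgroup R} {a : R} : a ∈ W.idealCore ↔ ∀ y z, y * a * z ∈ W :=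
  TwoSidedIdeal.mem_mk' ..

theorem idealCore_eq_top {W : AddSubgroup R} : W.idealCore = ⊤ ↔ W = ⊤ := by
  refine ⟨fun h => eq_top_iff.2 fun a _ => ?_, fun h => TwoSidedIdeal.eq_top _ ?_⟩
  · simpa using mem_idealCore.1 (h ▸ TwoSidedIdeal.mem_top R : (1 : R) ∈ W.idealCore) a 1
  · exact mem_idealCore.2 fun y z => h ▸ mem_top _

end AddSubgroup

theorem polarization_sandwich_mem {R : Type*} [Ring R] (D : R →+ R) (S : AddSubgroup R)
    (hD : ∀ x, x * D x * x ∈ S) (x y z : R) :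
    x * D y * z + x * D z * y + y * D x * z + y * D z * x + z * D x * y + z * D y * x ∈ S := by
  have key : x * D y * z + x * D z * y + y * D x * z + y * D z * x + z * D x * y + z * D y * x =
      ((x + y + z) * D (x + y + z) * (x + y + z) + x * D x * x + y * D y * y + z * D z * z) -
      ((x + y) * D (x + y) * (x + y) + (x + z) * D (x + z) * (x + z) +
        (y + z) * D (y + z) * (y + z)) := by
    simp only [map_add]
    noncomm_ring
  rw [key]
  exact S.sub_mem (S.add_mem (S.add_mem (S.add_mem (hD _) (hD x)) (hD y)) (hD z))
    (S.add_mem (S.add_mem (hD _) (hD _)) (hD _))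

section Sandwich

variable {F A : Type*} [Field F] [Ring A] [Algebra F A]

theorem sandwich_apply_mem (h2 : (2 : F) ≠ 0) (D : A →ₗ[F] A) {W : Submodule F A}
    (hcomm : commutatorSpan F A ≤ W) (hD : ∀ x, x * D x * x ∈ W) {M : TwoSidedIdeal A}
    (hMW : ∀ a ∈ M, a ∈ W) {x : A} (hx : x ∈ M) (y z : A) : y * D x * z ∈ W := by
  have hsymm : ∀ y z : A, y * D x * z + z * D x * y ∈ W := by
    intro y z
    have hM : x * D y * z + x * D z * y + y * D z * x + z * D y * x ∈ M :=
      M.add_mem (M.add_mem (M.add_mem (M.mul_mem_right _ _ (M.mul_mem_right _ _ hx))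
        (M.mul_mem_right _ _ (M.mul_mem_right _ _ hx))) (M.mul_mem_left _ _ hx))
        (M.mul_mem_left _ _ hx)
    have hpol := polarization_sandwich_mem D.toAddMonoidHom W.toAddSubgroup hD x y z
    convert W.sub_mem hpol (hMW _ hM) using 1
    simp only [LinearMap.toAddMonoidHom_coe]
    abel
  have hleft : ∀ y : A, y * D x ∈ W := by
    intro y
    have h2y : (2 : F) • (y * D x) ∈ W := by
      convert W.add_mem (hsymm y 1) (hcomm (commutator_mem_commutatorSpan F y (D x))) using 1
      rw [two_smul]
      noncomm_ring
    simpa [smul_smul, inv_mul_cancel₀ h2] using W.smul_mem (2 : F)⁻¹ h2y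
  convert W.add_mem (hcomm (commutator_mem_commutatorSpan F (y * D x) z)) (hleft (z * y))
    using 1
  noncomm_ring

variable [FiniteDimensional F A]

theorem apply_mem_of_isCoatom (h2 : (2 : F) ≠ 0) (D : A →ₗ[F] A)
    (hD : ∀ x, x * D x * x ∈ commutatorSpan F A) {M : TwoSidedIdeal A} (hM : IsCoatom M)
    {x : A} (hx : x ∈ M) : D x ∈ M := by
  by_contra hDx
  set W := commutatorSpan F A ⊔ M.asIdeal.restrictScalars F
  have hMW : ∀ a ∈ M, a ∈ W := fun a ha => Submodule.mem_sup_right ha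
  have hMcore : M ≤ W.toAddSubgroup.idealCore := fun a ha =>
    AddSubgroup.mem_idealCore.2 fun y z => hMW _ (M.mul_mem_right _ _ (M.mul_mem_left _ _ ha))
  have hDcore : D x ∈ W.toAddSubgroup.idealCore := AddSubgroup.mem_idealCore.2 <|
    sandwich_apply_mem h2 D le_sup_left (fun x => Submodule.mem_sup_left (hD x)) hMW hx
  have hcore : W.toAddSubgroup.idealCore = ⊤ :=
    hM.2 _ (lt_of_le_of_ne hMcore fun h => hDx (h ▸ hDcore))
  exact commutatorSpan_sup_ne_top F hM.1
    (Submodule.toAddSubgroup_eq_top.1 (AddSubgroup.idealCore_eq_top.1 hcore))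

end Sandwich

/-- Let `A` be a finite-dimensional algebra over a field `F` with `char F ≠ 2`, and let
`D : A → A` be a linear map with `x * D x * x ∈ [A,A]` for every `x ∈ A`. Then `D`
leaves every maximal two-sided ideal of `A` invariant; in particular
`D (rad A) ⊆ rad A`. -/
theorem maximal_ideals_invariant_of_sandwich_commutator (F A : Type*) [Field F] [Ring A]
    [Algebra F A] [FiniteDimensional F A] (h2 : (2 : F) ≠ 0) (D : A →ₗ[F] A)
    (hD : ∀ x : A, x * D x * x ∈
      Submodule.span F {z : A | ∃ u v : A, z = u * v - v * u}) :
    (∀ M : TwoSidedIdeal A, IsCoatom M → ∀ x ∈ M, D x ∈ M) ∧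
      ∀ x ∈ ringRad A, D x ∈ ringRad A := by
  have hmax : ∀ M : TwoSidedIdeal A, IsCoatom M → ∀ x ∈ M, D x ∈ M :=
    fun _ hM _ hx => apply_mem_of_isCoatom h2 D hD hM hx
  refine ⟨hmax, fun x hx => ?_⟩
  rw [ringRad, TwoSidedIdeal.mem_sInf] at hx ⊢
  exact fun M hM => hmax M hM x (hx M hM)
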